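/- Assume b_EI > 0 and b_II > 0. Then the function N_E ↦ N_I(N_E) is differentiable on [0,∞), its derivative satisfies N_I'(N_E) = b_EI·N_I(N_E)²·I(N_E) / (√a_I + b_II·N_I(N_E)²·I(N_E)), where I(N_E) = ∫₀^∞ e^{−s²/2}·e^{−(b_EI·N_E − b_II·N_I(N_E) + (b_EI − b_EE)·ν_ext)·s/√a_I}·(e^{s·V_F/√a_I} − e^{s·V_R/√a_I}) ds, and consequently 0 < N_I'(N_E) < b_EI/b_II for all N_E ≥ 0; in particular N_I(·) is strictly increasing. -/

import Mathlib

open MeasureTheory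

/-- The stationary firing-rate functional `I2` of the inhibitory population. -/
noncomputable def I2 (VR VF aI bEE bEI bII νext : ℝ) (NE NI : ℝ) : ℝ :=
  ∫ s in Set.Ioi (0:ℝ),
    Real.exp (-s ^ 2 / 2) / s *
      (Real.exp (s * ((VF - (bEI * NE - bII * NI + (bEI - bEE) * νext)) / Real.sqrt aI)) -
       Real.exp (s * ((VR - (bEI * NE - bII * NI + (bEI - bEE) * νext)) / Real.sqrt aI)))

/-- The auxiliary integral `I(N_E)` appearing in the formula for `N_I'(N_E)`. -/
noncomputable def Iaux (VR VF aI bEE bEI bII νext : ℝ) (NIfun : ℝ → ℝ) (NE : ℝ) : ℝ :=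
  ∫ s in Set.Ioi (0:ℝ),
    Real.exp (-s ^ 2 / 2) *
      Real.exp (-((bEI * NE - bII * NIfun NE + (bEI - bEE) * νext) * s / Real.sqrt aI)) *
      (Real.exp (s * VF / Real.sqrt aI) - Real.exp (s * VR / Real.sqrt aI))


namespace NIfunAux
open Set

lemma exp_addm (x y : ℝ) : Real.exp x * Real.exp y = Real.exp (x + y) := (Real.exp_add x y).symm

lemma int_gauss_lin (M : ℝ) :
    IntegrableOn (fun s : ℝ => Real.exp (-s ^ 2 / 2 + s * M)) (Ioi 0) := by
  have h : Integrable (fun s : ℝ => Real.exp (M ^ 2 / 2) * Real.exp (-(1/2) * (s - M) ^ 2)) :=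
    ((integrable_exp_neg_mul_sq (by norm_num : (0:ℝ) < 1/2)).comp_sub_right M).const_mul _
  have h2 : Integrable (fun s : ℝ => Real.exp (-s ^ 2 / 2 + s * M)) := by
    refine h.congr (Filter.Eventually.of_forall fun s => ?_)
    show Real.exp (M ^ 2 / 2) * Real.exp (-(1/2) * (s - M) ^ 2) = _
    rw [exp_addm]; congr 1; ring
  exact h2.integrableOn

lemma exp_sub_one_le (t : ℝ) : Real.exp t - 1 ≤ t * Real.exp t := by
  have h1 : (1 - t) * Real.exp t ≤ Real.exp (-t) * Real.exp t :=
    mul_le_mul_of_nonneg_right (by linarith [Real.add_one_le_exp (-t)]) (Real.exp_pos t).le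
  rw [exp_addm] at h1
  simp at h1
  linarith

lemma int_core {A B : ℝ} (hAB : B ≤ A) :
    IntegrableOn (fun s : ℝ => Real.exp (-s ^ 2 / 2) / s * (Real.exp (s * A) - Real.exp (s * B)))
      (Ioi 0) := by
  have hcont : ContinuousOn
      (fun s : ℝ => Real.exp (-s ^ 2 / 2) / s * (Real.exp (s * A) - Real.exp (s * B))) (Ioi 0) := by
    apply ContinuousOn.mul
    · exact (Real.continuous_exp.comp (by continuity)).continuousOn.div continuousOn_id
        (fun s hs => ne_of_gt hs)
    · fun_prop
  refine Integrable.mono ((int_gauss_lin A).const_mul (A - B))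
    (hcont.aestronglyMeasurable measurableSet_Ioi) ?_
  rw [ae_restrict_iff' measurableSet_Ioi]
  refine Filter.Eventually.of_forall fun s hs => ?_
  have hs0 : 0 < s := hs
  have key : Real.exp (s * A) - Real.exp (s * B) ≤ s * (A - B) * Real.exp (s * A) := by
    have h1 : Real.exp (s * A) - Real.exp (s * B)
        = Real.exp (s * B) * (Real.exp (s * (A - B)) - 1) := by
      rw [mul_sub, exp_addm]; ring_nf
    have h2 := exp_sub_one_le (s * (A - B))
    have h3 : Real.exp (s * B) * (Real.exp (s * (A - B)) - 1)
        ≤ Real.exp (s * B) * (s * (A - B) * Real.exp (s * (A - B))) :=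
      mul_le_mul_of_nonneg_left h2 (Real.exp_pos _).le
    have h4 : Real.exp (s * B) * Real.exp (s * (A - B)) = Real.exp (s * A) := by
      rw [exp_addm]; congr 1; ring
    rw [h1]
    calc Real.exp (s * B) * (Real.exp (s * (A - B)) - 1)
        ≤ Real.exp (s * B) * (s * (A - B) * Real.exp (s * (A - B))) := h3
      _ = s * (A - B) * Real.exp (s * A) := by rw [← h4]; ring
  have hnn : 0 ≤ Real.exp (s * A) - Real.exp (s * B) := by
    have : Real.exp (s * B) ≤ Real.exp (s * A) := Real.exp_le_exp.2 (by nlinarith)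
    linarith
  have hC : 0 ≤ Real.exp (-s ^ 2 / 2) / s := by positivity
  rw [Real.norm_eq_abs, abs_of_nonneg (mul_nonneg hC hnn), Real.norm_eq_abs]
  calc Real.exp (-s ^ 2 / 2) / s * (Real.exp (s * A) - Real.exp (s * B))
      ≤ Real.exp (-s ^ 2 / 2) / s * (s * (A - B) * Real.exp (s * A)) :=
        mul_le_mul_of_nonneg_left key hC
    _ = (A - B) * Real.exp (-s ^ 2 / 2 + s * A) := by
        rw [← exp_addm]; field_simp
    _ ≤ |(A - B) * Real.exp (-s ^ 2 / 2 + s * A)| := le_abs_self _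

lemma int_core2 (A B : ℝ) :
    IntegrableOn (fun s : ℝ => Real.exp (-s ^ 2 / 2) * (Real.exp (s * A) - Real.exp (s * B)))
      (Ioi 0) := by
  have h := (int_gauss_lin A).sub (int_gauss_lin B)
  refine h.congr (Filter.Eventually.of_forall fun s => ?_)
  show Real.exp (-s ^ 2 / 2 + s * A) - Real.exp (-s ^ 2 / 2 + s * B) = _
  rw [Real.exp_add, Real.exp_add]; ring

noncomputable def gfun (VR VF r : ℝ) (x : ℝ) : ℝ :=
  ∫ s in Ioi (0:ℝ), Real.exp (-s ^ 2 / 2) / s *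
    (Real.exp (s * ((VF - x) / r)) - Real.exp (s * ((VR - x) / r)))

noncomputable def Jfun (VR VF r : ℝ) (x : ℝ) : ℝ :=
  ∫ s in Ioi (0:ℝ), Real.exp (-s ^ 2 / 2) *
    (Real.exp (s * ((VF - x) / r)) - Real.exp (s * ((VR - x) / r)))

lemma hasDerivAt_gfun (VR VF r : ℝ) (hV : VR < VF) (hr : 0 < r) (x : ℝ) :
    HasDerivAt (gfun VR VF r) (-(1 / r) * Jfun VR VF r x) x := by
  set F : ℝ → ℝ → ℝ := fun x s => Real.exp (-s ^ 2 / 2) / s *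
    (Real.exp (s * ((VF - x) / r)) - Real.exp (s * ((VR - x) / r))) with hFdef
  set F' : ℝ → ℝ → ℝ := fun x s => -(1 / r) * (Real.exp (-s ^ 2 / 2) *
    (Real.exp (s * ((VF - x) / r)) - Real.exp (s * ((VR - x) / r)))) with hF'def
  set M : ℝ := (|VF| + |x| + 1) / r with hMdef
  have hmeasF : ∀ y : ℝ, AEStronglyMeasurable (F y) (volume.restrict (Ioi 0)) := by
    intro y
    apply ContinuousOn.aestronglyMeasurable _ measurableSet_Ioi
    apply ContinuousOn.mul
    · exact (Real.continuous_exp.comp (by continuity)).continuousOn.div continuousOn_id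
        (fun s hs => ne_of_gt hs)
    · fun_prop
  have hderiv : ∀ s ∈ Ioi (0:ℝ), ∀ y : ℝ, HasDerivAt (fun x => F x s) (F' y s) y := by
    intro s hs y
    have hs0 : (0:ℝ) < s := hs
    have hlin : ∀ V : ℝ, HasDerivAt (fun x : ℝ => s * ((V - x) / r)) (-(s / r)) y := by
      intro V
      have h1 : HasDerivAt (fun x : ℝ => s * V / r - s / r * x) (0 - s / r * 1) y :=
        (hasDerivAt_const y (s * V / r)).sub ((hasDerivAt_id y).const_mul (s / r))
      have h2 : (fun x : ℝ => s * ((V - x) / r)) = fun x : ℝ => s * V / r - s / r * x := by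
        funext z; ring
      rw [h2]
      convert h1 using 1; ring
    have hE : ∀ V : ℝ, HasDerivAt (fun x : ℝ => Real.exp (s * ((V - x) / r)))
        (Real.exp (s * ((V - y) / r)) * (-(s / r))) y := fun V => (hlin V).exp
    have h := ((hE VF).sub (hE VR)).const_mul (Real.exp (-s ^ 2 / 2) / s)
    refine HasDerivAt.congr_deriv h ?_
    simp only [hF'def]
    field_simp
    ring
  have hbound : ∀ s ∈ Ioi (0:ℝ), ∀ y ∈ Metric.ball x 1,
      ‖F' y s‖ ≤ (1 / r) * Real.exp (-s ^ 2 / 2 + s * M) := by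
    intro s hs y hy
    have hs0 : (0:ℝ) < s := hs
    have hyx : |y - x| < 1 := by
      rw [Metric.mem_ball, Real.dist_eq] at hy; exact hy
    have hdiff_nn : 0 ≤ Real.exp (s * ((VF - y) / r)) - Real.exp (s * ((VR - y) / r)) := by
      have : Real.exp (s * ((VR - y) / r)) ≤ Real.exp (s * ((VF - y) / r)) := by
        apply Real.exp_le_exp.2
        apply mul_le_mul_of_nonneg_left _ hs0.le
        gcongr <;> linarith
      linarith
    have hVFy : (VF - y) / r ≤ M := by
      rw [hMdef]
      apply div_le_div_of_nonneg_right _ hr.le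
      have h1 : -y ≤ |y| := neg_le_abs y
      have h2 : |y| ≤ |x| + 1 := by
        calc |y| = |x + (y - x)| := by ring_nf
          _ ≤ |x| + |y - x| := abs_add_le _ _
          _ ≤ |x| + 1 := by linarith
      have := le_abs_self VF
      linarith
    have hle : Real.exp (s * ((VF - y) / r)) - Real.exp (s * ((VR - y) / r))
        ≤ Real.exp (s * M) := by
      have : Real.exp (s * ((VF - y) / r)) ≤ Real.exp (s * M) :=
        Real.exp_le_exp.2 (mul_le_mul_of_nonneg_left hVFy hs0.le)
      have := Real.exp_pos (s * ((VR - y) / r))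
      linarith
    simp only [hF'def, norm_mul, norm_neg, Real.norm_eq_abs]
    rw [Real.abs_exp, abs_of_nonneg hdiff_nn, ← exp_addm,
      abs_of_nonneg (by positivity : (0:ℝ) ≤ 1/r)]
    apply mul_le_mul_of_nonneg_left _ (by positivity : (0:ℝ) ≤ 1/r)
    exact mul_le_mul_of_nonneg_left hle (Real.exp_pos _).le
  have hAB : (VR - x) / r ≤ (VF - x) / r := by
    gcongr <;> linarith
  have key := hasDerivAt_integral_of_dominated_loc_of_deriv_le
    (F := F) (F' := F') (x₀ := x) (s := Metric.ball x 1)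
    (bound := fun s => (1 / r) * Real.exp (-s ^ 2 / 2 + s * M))
    (μ := volume.restrict (Ioi 0)) (Metric.ball_mem_nhds x one_pos)
    (Filter.Eventually.of_forall hmeasF)
    (int_core hAB)
    (Continuous.aestronglyMeasurable (by fun_prop))
    (by rw [ae_restrict_iff' measurableSet_Ioi]
        exact Filter.Eventually.of_forall fun s hs y hy => hbound s hs y hy)
    ((int_gauss_lin M).const_mul (1 / r))
    (by rw [ae_restrict_iff' measurableSet_Ioi]
        exact Filter.Eventually.of_forall fun s hs y _ => hderiv s hs y)
  have h2 := key.2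
  have : (∫ s in Ioi (0:ℝ), F' x s) = -(1 / r) * Jfun VR VF r x := by
    rw [hF'def, Jfun, ← MeasureTheory.integral_const_mul]
  rw [this] at h2
  exact h2

lemma Jfun_pos (VR VF r : ℝ) (hV : VR < VF) (hr : 0 < r) (x : ℝ) :
    0 < Jfun VR VF r x := by
  rw [Jfun]
  have hnn : 0 ≤ᵐ[volume.restrict (Ioi (0:ℝ))] fun s : ℝ =>
      Real.exp (-s ^ 2 / 2) * (Real.exp (s * ((VF - x) / r)) - Real.exp (s * ((VR - x) / r))) := by
    refine (ae_restrict_iff' measurableSet_Ioi).mpr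
      (Filter.Eventually.of_forall fun s hs => ?_)
    have hs0 : (0:ℝ) < s := hs
    have : Real.exp (s * ((VR - x) / r)) ≤ Real.exp (s * ((VF - x) / r)) := by
      apply Real.exp_le_exp.2
      gcongr
    simp only [Pi.zero_apply]
    nlinarith [Real.exp_pos (-s^2/2)]
  rw [MeasureTheory.setIntegral_pos_iff_support_of_nonneg_ae hnn (int_core2 _ _)]
  have hsub : Ioi (0:ℝ) ⊆ Function.support (fun s : ℝ =>
      Real.exp (-s ^ 2 / 2) * (Real.exp (s * ((VF - x) / r)) - Real.exp (s * ((VR - x) / r)))) := by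
    intro s hs
    have hs0 : (0:ℝ) < s := hs
    have hlt : Real.exp (s * ((VR - x) / r)) < Real.exp (s * ((VF - x) / r)) := by
      apply Real.exp_lt_exp.2
      apply mul_lt_mul_of_pos_left _ hs0
      gcongr <;> linarith
    have : 0 < Real.exp (-s ^ 2 / 2) *
        (Real.exp (s * ((VF - x) / r)) - Real.exp (s * ((VR - x) / r))) := by
      apply mul_pos (Real.exp_pos _); linarith
    exact Function.mem_support.2 (ne_of_gt this)
  calc (0:ENNReal) < ⊤ := by simp
    _ = volume (Ioi (0:ℝ)) := Real.volume_Ioi.symm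
    _ ≤ _ := measure_mono (subset_inter hsub (by rfl))

lemma gfun_pos (VR VF r : ℝ) (hV : VR < VF) (hr : 0 < r) (x : ℝ) :
    0 < gfun VR VF r x := by
  rw [gfun]
  have hnn : 0 ≤ᵐ[volume.restrict (Ioi (0:ℝ))] fun s : ℝ =>
      Real.exp (-s ^ 2 / 2) / s *
        (Real.exp (s * ((VF - x) / r)) - Real.exp (s * ((VR - x) / r))) := by
    refine (ae_restrict_iff' measurableSet_Ioi).mpr
      (Filter.Eventually.of_forall fun s hs => ?_)
    have hs0 : (0:ℝ) < s := hs
    have : Real.exp (s * ((VR - x) / r)) ≤ Real.exp (s * ((VF - x) / r)) := by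
      apply Real.exp_le_exp.2
      gcongr
    simp only [Pi.zero_apply]
    have hC : 0 ≤ Real.exp (-s ^ 2 / 2) / s := by positivity
    nlinarith
  have hAB : (VR - x) / r ≤ (VF - x) / r := by gcongr <;> linarith
  rw [MeasureTheory.setIntegral_pos_iff_support_of_nonneg_ae hnn (int_core hAB)]
  have hsub : Ioi (0:ℝ) ⊆ Function.support (fun s : ℝ =>
      Real.exp (-s ^ 2 / 2) / s *
        (Real.exp (s * ((VF - x) / r)) - Real.exp (s * ((VR - x) / r)))) := by
    intro s hs
    have hs0 : (0:ℝ) < s := hs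
    have hlt : Real.exp (s * ((VR - x) / r)) < Real.exp (s * ((VF - x) / r)) := by
      apply Real.exp_lt_exp.2
      apply mul_lt_mul_of_pos_left _ hs0
      gcongr <;> linarith
    have hC : 0 < Real.exp (-s ^ 2 / 2) / s := by positivity
    have : 0 < Real.exp (-s ^ 2 / 2) / s *
        (Real.exp (s * ((VF - x) / r)) - Real.exp (s * ((VR - x) / r))) := by
      apply mul_pos hC; linarith
    exact Function.mem_support.2 (ne_of_gt this)
  calc (0:ENNReal) < ⊤ := by simp
    _ = volume (Ioi (0:ℝ)) := Real.volume_Ioi.symm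
    _ ≤ _ := measure_mono (subset_inter hsub (by rfl))

end NIfunAux

open NIfunAux in
/-- If `b_EI, b_II > 0`, the branch `N_E ↦ N_I(N_E)` of solutions of
`N_I · I2(N_E, N_I) = 1` is differentiable on `[0,∞)` with the explicit derivative
formula, its derivative lies strictly between `0` and `b_EI/b_II`, and `N_I` is
strictly increasing on `[0,∞)`. -/
theorem NIfun_hasDeriv (VR VF aE aI bEE bIE bEI bII νext : ℝ)
    (hV : VR < VF) (haE : 0 < aE) (haI : 0 < aI)
    (hEE : 0 ≤ bEE) (hIE : 0 ≤ bIE) (hEI : 0 < bEI) (hII : 0 < bII) (hν : 0 ≤ νext)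
    (NIfun : ℝ → ℝ)
    (hNI : ∀ NE : ℝ, 0 ≤ NE →
      0 < NIfun NE ∧ NIfun NE * I2 VR VF aI bEE bEI bII νext NE (NIfun NE) = 1) :
    (∀ NE : ℝ, 0 ≤ NE →
      HasDerivWithinAt NIfun
        (bEI * (NIfun NE) ^ 2 * Iaux VR VF aI bEE bEI bII νext NIfun NE /
          (Real.sqrt aI + bII * (NIfun NE) ^ 2 * Iaux VR VF aI bEE bEI bII νext NIfun NE))
        (Set.Ici 0) NE) ∧
    (∀ NE : ℝ, 0 ≤ NE →
      0 < bEI * (NIfun NE) ^ 2 * Iaux VR VF aI bEE bEI bII νext NIfun NE /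
            (Real.sqrt aI + bII * (NIfun NE) ^ 2 * Iaux VR VF aI bEE bEI bII νext NIfun NE) ∧
      bEI * (NIfun NE) ^ 2 * Iaux VR VF aI bEE bEI bII νext NIfun NE /
            (Real.sqrt aI + bII * (NIfun NE) ^ 2 * Iaux VR VF aI bEE bEI bII νext NIfun NE)
          < bEI / bII) ∧
    StrictMonoOn NIfun (Set.Ici 0) := by

  set r : ℝ := Real.sqrt aI with hrdef
  have hr : 0 < r := Real.sqrt_pos.2 haI
  set c : ℝ := (bEI - bEE) * νext with hcdef
  set g : ℝ → ℝ := gfun VR VF r with hgdef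
  set J : ℝ → ℝ := Jfun VR VF r with hJdef
  have hgd : ∀ x, HasDerivAt g (-(1 / r) * J x) x := hasDerivAt_gfun VR VF r hV hr
  have hJpos : ∀ x, 0 < J x := Jfun_pos VR VF r hV hr
  have hgpos : ∀ x, 0 < g x := gfun_pos VR VF r hV hr
  have hgdiff : Differentiable ℝ g := fun x => (hgd x).differentiableAt
  have hganti : StrictAnti g := by
    apply strictAnti_of_deriv_neg
    intro x
    rw [(hgd x).deriv]
    have := hJpos x
    have h1 : 0 < 1 / r := by positivity
    nlinarith
  -- I2 in terms of g
  have hI2 : ∀ NE NI : ℝ, I2 VR VF aI bEE bEI bII νext NE NI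
      = g (bEI * NE - bII * NI + c) := fun _ _ => rfl
  -- the implicit map φ
  set φ : ℝ → ℝ := fun y => y + bII * (g y)⁻¹ - c with hφdef
  set φd : ℝ → ℝ := fun y => 1 + bII * ((1 / r) * J y / (g y) ^ 2) with hφddef
  have hφderiv : ∀ y, HasDerivAt φ (φd y) y := by
    intro y
    have h1 : HasDerivAt (fun y => (g y)⁻¹) (-(-(1 / r) * J y) / (g y) ^ 2) y :=
      (hgd y).inv (hgpos y).ne'
    have h2 := ((hasDerivAt_id y).add (h1.const_mul bII)).sub_const c
    refine HasDerivAt.congr_deriv h2 ?_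
    simp only [hφddef]
    ring
  have hφdpos : ∀ y, 0 < φd y := by
    intro y
    have h1 := hJpos y
    have h2 := hgpos y
    have : 0 < bII * ((1 / r) * J y / (g y) ^ 2) := by positivity
    simp only [hφddef]
    linarith
  have hφmono : StrictMono φ := by
    apply strictMono_of_deriv_pos
    intro y
    rw [(hφderiv y).deriv]
    exact hφdpos y
  have hφcont : Continuous φ := by
    have : Differentiable ℝ φ := fun y => (hφderiv y).differentiableAt
    exact this.continuous
  have hφsurj : Function.Surjective φ := by
    intro z
    have hgt : 0 < g (z + c) := hgpos _
    set t := z + c with htdef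
    set y₀ := t - bII * (g t)⁻¹ with hy0def
    have hy0t : y₀ ≤ t := by
      have : 0 < bII * (g t)⁻¹ := by positivity
      simp only [hy0def]; linarith
    have hφt : z ≤ φ t := by
      have : 0 < bII * (g t)⁻¹ := by positivity
      simp only [hφdef, htdef]; linarith
    have hφy0 : φ y₀ ≤ z := by
      have hmono : (g t)⁻¹ ≥ (g y₀)⁻¹ := by
        apply inv_anti₀ (hgpos t)
        exact hganti.antitone hy0t
      have : bII * (g y₀)⁻¹ ≤ bII * (g t)⁻¹ :=
        mul_le_mul_of_nonneg_left hmono hII.le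
      simp only [hφdef, hy0def, htdef] at *
      linarith
    have := intermediate_value_Icc hy0t hφcont.continuousOn
    have hz : z ∈ Set.Icc (φ y₀) (φ t) := ⟨hφy0, hφt⟩
    obtain ⟨y, _, hy⟩ := this hz
    exact ⟨y, hy⟩
  set e := StrictMono.orderIsoOfSurjective φ hφmono hφsurj with hedef
  set ψ : ℝ → ℝ := fun z => e.symm z with hψdef
  have hψcont : Continuous ψ := e.symm.continuous
  have hφψ : ∀ z, φ (ψ z) = z := by
    intro z
    have := e.apply_symm_apply z
    rwa [show (⇑e = φ) from StrictMono.coe_orderIsoOfSurjective φ hφmono hφsurj] at this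
  have hψφ : ∀ y, ψ (φ y) = y := by
    intro y
    have := e.symm_apply_apply y
    rwa [show (⇑e = φ) from StrictMono.coe_orderIsoOfSurjective φ hφmono hφsurj] at this
  have hψderiv : ∀ z, HasDerivAt ψ (φd (ψ z))⁻¹ z := by
    intro z
    exact HasDerivAt.of_local_left_inverse (hψcont.continuousAt)
      (hφderiv (ψ z)) (hφdpos (ψ z)).ne'
      (Filter.Eventually.of_forall hφψ)
  -- the explicit formula for NIfun on Ici 0
  set N : ℝ → ℝ := fun t => (bEI * t + c - ψ (bEI * t)) / bII with hNdef
  have hkey : ∀ t : ℝ, 0 ≤ t → NIfun t = N t := by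
    intro t ht
    obtain ⟨hpos, heq⟩ := hNI t ht
    set y' := bEI * t - bII * NIfun t + c with hy'def
    have hg' : NIfun t * g y' = 1 := by rw [← hI2]; exact heq
    have hginv : (g y')⁻¹ = NIfun t := (eq_inv_of_mul_eq_one_left hg').symm
    have hφy' : φ y' = bEI * t := by
      simp only [hφdef]; rw [hginv, hy'def]; ring
    have : ψ (bEI * t) = y' := by rw [← hφy', hψφ]
    simp only [hNdef, this, hy'def]
    field_simp
    ring
  -- Iaux in terms of J
  have hIaux : ∀ t : ℝ, Iaux VR VF aI bEE bEI bII νext NIfun t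
      = J (bEI * t - bII * NIfun t + c) := by
    intro t
    rw [Iaux, hJdef, Jfun]
    apply MeasureTheory.setIntegral_congr_fun measurableSet_Ioi
    intro s _
    simp only [← hrdef, ← hcdef]
    set V0 : ℝ := bEI * t - bII * NIfun t + c with hV0def
    have e1 : Real.exp (-(V0 * s / r)) * Real.exp (s * VF / r)
        = Real.exp (s * ((VF - V0) / r)) := by
      rw [exp_addm]; congr 1; ring
    have e2 : Real.exp (-(V0 * s / r)) * Real.exp (s * VR / r)
        = Real.exp (s * ((VR - V0) / r)) := by
      rw [exp_addm]; congr 1; ring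
    calc Real.exp (-s ^ 2 / 2) * Real.exp (-(V0 * s / r)) *
          (Real.exp (s * VF / r) - Real.exp (s * VR / r))
        = Real.exp (-s ^ 2 / 2) * (Real.exp (-(V0 * s / r)) * Real.exp (s * VF / r)
            - Real.exp (-(V0 * s / r)) * Real.exp (s * VR / r)) := by ring
      _ = Real.exp (-s ^ 2 / 2) *
          (Real.exp (s * ((VF - V0) / r)) - Real.exp (s * ((VR - V0) / r))) := by
          rw [e1, e2]
  -- derivative of N
  have hNderiv : ∀ t : ℝ, HasDerivAt N
      ((bEI * 1 - (φd (ψ (bEI * t)))⁻¹ * (bEI * 1)) / bII) t := by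
    intro t
    have hinner : HasDerivAt (fun u : ℝ => bEI * u) (bEI * 1) t :=
      (hasDerivAt_id t).const_mul bEI
    have h1 : HasDerivAt (fun u : ℝ => ψ (bEI * u)) ((φd (ψ (bEI * t)))⁻¹ * (bEI * 1)) t :=
      (hψderiv (bEI * t)).comp t hinner
    exact (((hinner.add_const c)).sub h1).div_const bII
  -- match derivative values
  have hval : ∀ t : ℝ, 0 ≤ t →
      (bEI * 1 - (φd (ψ (bEI * t)))⁻¹ * (bEI * 1)) / bII
        = bEI * (NIfun t) ^ 2 * Iaux VR VF aI bEE bEI bII νext NIfun t /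
            (r + bII * (NIfun t) ^ 2 * Iaux VR VF aI bEE bEI bII νext NIfun t) := by
    intro t ht
    obtain ⟨hpos, heq⟩ := hNI t ht
    set y' := bEI * t - bII * NIfun t + c with hy'def
    have hg' : NIfun t * g y' = 1 := by rw [← hI2]; exact heq
    have hφy' : φ y' = bEI * t := by
      have hginv : (g y')⁻¹ = NIfun t := (eq_inv_of_mul_eq_one_left hg').symm
      simp only [hφdef]; rw [hginv, hy'def]; ring
    have hψt : ψ (bEI * t) = y' := by rw [← hφy', hψφ]
    rw [hψt, hIaux t, ← hy'def]
    have hG := hgpos y'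
    have hJ := hJpos y'
    have hNIformula : NIfun t = (g y')⁻¹ := eq_inv_of_mul_eq_one_left hg'
    rw [hNIformula]
    simp only [hφddef]
    have hden : 0 < r + bII * ((g y')⁻¹) ^ 2 * J y' := by positivity
    have hden2 : (0:ℝ) < 1 + bII * (1 / r * J y' / g y' ^ 2) := by positivity
    field_simp
    ring
  -- assemble
  have hmain : ∀ NE : ℝ, 0 ≤ NE →
      HasDerivWithinAt NIfun
        (bEI * (NIfun NE) ^ 2 * Iaux VR VF aI bEE bEI bII νext NIfun NE /
          (r + bII * (NIfun NE) ^ 2 * Iaux VR VF aI bEE bEI bII νext NIfun NE))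
        (Set.Ici 0) NE := by
    intro NE hNE
    have h1 := ((hNderiv NE).hasDerivWithinAt (s := Set.Ici (0:ℝ)))
    rw [hval NE hNE] at h1
    exact h1.congr (fun x hx => hkey x hx) (hkey NE hNE)
  have hbounds : ∀ NE : ℝ, 0 ≤ NE →
      0 < bEI * (NIfun NE) ^ 2 * Iaux VR VF aI bEE bEI bII νext NIfun NE /
            (r + bII * (NIfun NE) ^ 2 * Iaux VR VF aI bEE bEI bII νext NIfun NE) ∧
      bEI * (NIfun NE) ^ 2 * Iaux VR VF aI bEE bEI bII νext NIfun NE /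
            (r + bII * (NIfun NE) ^ 2 * Iaux VR VF aI bEE bEI bII νext NIfun NE)
          < bEI / bII := by
    intro NE hNE
    obtain ⟨hpos, _⟩ := hNI NE hNE
    have hJI : 0 < Iaux VR VF aI bEE bEI bII νext NIfun NE := by
      rw [hIaux]; exact hJpos _
    constructor
    · apply div_pos (by positivity) (by positivity)
    · rw [div_lt_div_iff₀ (by positivity) hII]
      have h1 : 0 < bEI * r := by positivity
      nlinarith [sq_nonneg (NIfun NE), mul_pos (mul_pos hEI (pow_pos hpos 2)) hJI]
  refine ⟨hmain, fun NE hNE => hbounds NE hNE, ?_⟩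
  -- strict monotonicity
  apply strictMonoOn_of_deriv_pos (convex_Ici 0)
  · intro x hx
    exact ((hmain x hx).continuousWithinAt)
  · intro x hx
    rw [interior_Ici] at hx
    have hx0 : (0:ℝ) ≤ x := le_of_lt hx
    have h1 := (hmain x hx0).hasDerivAt (Ici_mem_nhds hx)
    rw [h1.deriv]
    exact (hbounds x hx0).1
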